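/- Let G be a graph with γ(G) = k and a clique partition C_1,...,C_{k+1} of V(G) (so G ∈ 𝒟₁). Suppose v ∈ C_1 is a vertex with C_1 ∪ C_2 ⊆ N[v]. Then the induced subgraph on C_3 ∪ ... ∪ C_{k+1} contains no set E of vertices that is disjoint from some collection of cliques among C_3,...,C_{k+1}, dominates them, and has excess at least 1 (i.e., dominates strictly more than |E| cliques of the partition in total, counting cliques it meets and cliques it dominates while avoiding). -/

import Mathlib

/-!
Taking one vertex from each clique of the partition dominates `G`, so any set dominating
`j` of the `m` cliques extends to a dominating set with at most `m - j` further vertices.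
Here `v` together with `E` dominates `C₁`, `C₂` and the `|L| + |T|` cliques handled by `E`,
so `γ(G) ≤ (1 + |E|) + (k + 1) - (|L| + |T| + 2) < k` once the excess is positive.
-/

open Finset

/-- `S` dominates `T`: every vertex of `T` is in the closed neighborhood of `S`. -/
def Dominates {V : Type*} (G : SimpleGraph V) (S T : Set V) : Prop :=
  ∀ t ∈ T, ∃ s ∈ S, s = t ∨ G.Adj s t

/-- The domination number of a finite graph. -/
noncomputable def domNum {V : Type*} [Fintype V] (G : SimpleGraph V) : ℕ :=
  sInf {n | ∃ D : Finset V, D.card = n ∧ Dominates G ↑D Set.univ}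

/-- A partition of the vertex set of `G` into `m` cliques. -/
structure CliquePartition {V : Type*} (G : SimpleGraph V) (m : ℕ) where
  parts : Fin m → Finset V
  disj : ∀ i j, i ≠ j → Disjoint (parts i) (parts j)
  cover : ∀ v, ∃ i, v ∈ parts i
  clique : ∀ i, G.IsClique ↑(parts i)

/-- `S` is restraining with avoided-and-dominated cliques indexed by `L` and met
cliques indexed by `T` (so `S` is `(|S|, |L|+|T|)`-restraining; its excess is
`|L| + |T| − |S|`). -/
def IsRestrainingOn {V : Type*} [DecidableEq V] {G : SimpleGraph V} {m : ℕ}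
    (P : CliquePartition G m) (S : Finset V) (L T : Finset (Fin m)) : Prop :=
  Disjoint L T ∧
  (∀ i ∈ L, Disjoint S (P.parts i)) ∧
  Dominates G ↑S ↑(L.biUnion P.parts) ∧
  (S ⊆ T.biUnion P.parts) ∧
  (∀ i ∈ T, (P.parts i ∩ S).Nonempty)

section Domination

variable {V : Type*} {G : SimpleGraph V}

lemma Dominates.mono {S S' T T' : Set V} (h : Dominates G S T) (hS : S ⊆ S') (hT : T' ⊆ T) :
    Dominates G S' T' := fun t ht =>
  let ⟨s, hs, hst⟩ := h t (hT ht)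
  ⟨s, hS hs, hst⟩

lemma Dominates.union {S S' T T' : Set V} (h : Dominates G S T) (h' : Dominates G S' T') :
    Dominates G (S ∪ S') (T ∪ T') := by
  rintro t (ht | ht)
  · obtain ⟨s, hs, hst⟩ := h t ht
    exact ⟨s, Or.inl hs, hst⟩
  · obtain ⟨s, hs, hst⟩ := h' t ht
    exact ⟨s, Or.inr hs, hst⟩

lemma SimpleGraph.IsClique.dominates {S T : Set V} (hT : G.IsClique T) {s : V} (hs : s ∈ S)
    (hsT : s ∈ T) : Dominates G S T := fun t ht =>
  ⟨s, hs, (eq_or_ne s t).imp id fun hne => hT hsT ht hne⟩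

lemma domNum_le_card [Fintype V] {D : Finset V} (hD : Dominates G D Set.univ) :
    domNum G ≤ D.card :=
  Nat.sInf_le ⟨D, rfl, hD⟩

end Domination

namespace CliquePartition

variable {V : Type*} [DecidableEq V] {G : SimpleGraph V} {m : ℕ} (P : CliquePartition G m)

lemma exists_dominates_biUnion (J : Finset (Fin m)) :
    ∃ R : Finset V, R.card ≤ J.card ∧ Dominates G ↑R ↑(J.biUnion P.parts) := by
  induction J using Finset.induction_on with
  | empty => exact ⟨∅, by simp, by simp [Dominates]⟩
  | insert j J hj ih =>
    obtain ⟨R, hRcard, hR⟩ := ih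
    rw [biUnion_insert, card_insert_of_notMem hj]
    rcases (P.parts j).eq_empty_or_nonempty with hempty | ⟨s, hs⟩
    · exact ⟨R, by omega, by simpa [hempty] using hR⟩
    · refine ⟨insert s R, (card_insert_le s R).trans (by omega), ?_⟩
      rw [coe_insert, Set.insert_eq, coe_union]
      exact ((P.clique j).dominates (Set.mem_singleton s) hs).union hR

lemma biUnion_univ_parts [Fintype V] : univ.biUnion P.parts = univ :=
  eq_univ_of_forall fun v => let ⟨i, hi⟩ := P.cover v; mem_biUnion.mpr ⟨i, mem_univ i, hi⟩

lemma domNum_add_card_le [Fintype V] {S : Finset V} {J : Finset (Fin m)}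
    (hS : Dominates G ↑S ↑(J.biUnion P.parts)) : domNum G + J.card ≤ S.card + m := by
  obtain ⟨R, hRcard, hR⟩ := P.exists_dominates_biUnion (univ \ J)
  have hdom : Dominates G ↑(S ∪ R) Set.univ := by
    refine (hS.union hR).mono (by simp) fun v _ => ?_
    have hv : v ∈ univ.biUnion P.parts := P.biUnion_univ_parts ▸ mem_univ v
    rw [← union_sdiff_of_subset (subset_univ J), union_biUnion] at hv
    simpa using hv
  calc domNum G + J.card ≤ S.card + R.card + J.card := by
        have := card_union_le S R
        have := domNum_le_card hdom
        omega
    _ ≤ S.card + ((univ \ J).card + J.card) := by omega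
    _ = S.card + m := by
        rw [card_sdiff_add_card_eq_card (subset_univ J), card_univ, Fintype.card_fin]

end CliquePartition

lemma IsRestrainingOn.dominates {V : Type*} [DecidableEq V] {G : SimpleGraph V} {m : ℕ}
    {P : CliquePartition G m} {S : Finset V} {L T : Finset (Fin m)}
    (h : IsRestrainingOn P S L T) : Dominates G ↑S ↑((L ∪ T).biUnion P.parts) := by
  obtain ⟨-, -, hL, -, hT⟩ := h
  intro u hu
  obtain ⟨i, hi, hui⟩ := mem_biUnion.mp hu
  rcases mem_union.mp hi with hiL | hiT
  · exact hL u (mem_biUnion.mpr ⟨i, hiL, hui⟩)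
  · obtain ⟨s, hs⟩ := hT i hiT
    obtain ⟨hsi, hsS⟩ := mem_inter.mp hs
    exact (P.clique i).dominates (S := ↑S) hsS hsi u hui

theorem stmt13_general {V : Type*} [Fintype V] [DecidableEq V] (G : SimpleGraph V) (k : ℕ)
    (hk : domNum G = k) (P : CliquePartition G (k + 1))
    (i₁ i₂ : Fin (k + 1)) (hne : i₁ ≠ i₂)
    (v : V)
    (hdom : ∀ u ∈ P.parts i₁ ∪ P.parts i₂, u = v ∨ G.Adj v u) :
    ¬ ∃ (E : Finset V) (L T : Finset (Fin (k + 1))),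
        (∀ i ∈ L ∪ T, i ≠ i₁ ∧ i ≠ i₂) ∧
        (∀ w ∈ E, w ∉ P.parts i₁ ∪ P.parts i₂) ∧
        IsRestrainingOn P E L T ∧
        E.card + 1 ≤ L.card + T.card := by
  rintro ⟨E, L, T, hLT, -, hE, hexcess⟩
  have hi₂ : i₂ ∉ L ∪ T := fun h => (hLT i₂ h).2 rfl
  have hi₁ : i₁ ∉ insert i₂ (L ∪ T) := by
    simpa [hne] using fun h => (hLT i₁ h).1 rfl
  have hvdom : Dominates G {v} ↑(P.parts i₁ ∪ P.parts i₂) := fun u hu =>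
    ⟨v, rfl, (hdom u hu).imp Eq.symm id⟩
  have hbound := P.domNum_add_card_le (S := insert v E) (J := insert i₁ (insert i₂ (L ∪ T)))
    ((hvdom.union hE.dominates).mono (by simp) (by simp [Set.union_assoc]))
  rw [card_insert_of_notMem hi₁, card_insert_of_notMem hi₂, card_union_of_disjoint hE.1,
    hk] at hbound
  have := card_insert_le v E
  omega

/-- If `γ(G) = k`, `V(G)` is partitioned into `k+1` cliques, and `v ∈ C₁` satisfies
`C₁ ∪ C₂ ⊆ N[v]`, then `C₃ ∪ ⋯ ∪ C_{k+1}` contains no restraining set of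
excess at least `1` among the cliques `C₃, …, C_{k+1}`. -/
theorem stmt13 {V : Type*} [Fintype V] [DecidableEq V] (G : SimpleGraph V) (k : ℕ)
    (hk : domNum G = k) (P : CliquePartition G (k + 1))
    (i₁ i₂ : Fin (k + 1)) (hne : i₁ ≠ i₂)
    (v : V) (hv : v ∈ P.parts i₁)
    (hdom : ∀ u ∈ P.parts i₁ ∪ P.parts i₂, u = v ∨ G.Adj v u) :
    ¬ ∃ (E : Finset V) (L T : Finset (Fin (k + 1))),
        (∀ i ∈ L ∪ T, i ≠ i₁ ∧ i ≠ i₂) ∧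
        (∀ w ∈ E, w ∉ P.parts i₁ ∪ P.parts i₂) ∧
        IsRestrainingOn P E L T ∧
        E.card + 1 ≤ L.card + T.card :=
  stmt13_general G k hk P i₁ i₂ hne v hdom
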